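/- Let τ₁, τ₂, τ'₁, τ'₂ ∈ PGL₂(k) with τ₁ ≠ τ₂ and τ'₁ ≠ τ'₂, and set E := C_{τ₁} ∪ C_{τ₂} and E' := C_{τ'₁} ∪ C_{τ'₂} in ℙ¹×ℙ¹. Then E ∼₂ E' (i.e., E' = (μ × μ)(E) for some μ ∈ PGL₂(k)) if and only if (τ'₁, τ'₂) ∼ (τ₁, τ₂) or (τ'₁, τ'₂) ∼ (τ₂, τ₁). -/
import Mathlib


/-- The projective line `ℙ¹` over `k`, as the projectivization of `k²`. -/
abbrev ProjLine (k : Type*) [Field k] := Projectivization k (Fin 2 → k)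

/-- The projective linear automorphism of `ℙ¹` induced by `τ ∈ GL₂(k)`. -/
noncomputable def act {k : Type*} [Field k] (τ : (Fin 2 → k) ≃ₗ[k] (Fin 2 → k)) :
    ProjLine k → ProjLine k :=
  Projectivization.map τ.toLinearMap τ.injective

/-- The graph `C_τ = {(p, τ(p)) : p ∈ ℙ¹} ⊆ ℙ¹ × ℙ¹` of `τ`. -/
noncomputable def graph {k : Type*} [Field k] (τ : (Fin 2 → k) ≃ₗ[k] (Fin 2 → k)) :
    Set (ProjLine k × ProjLine k) :=
  {pq | pq.2 = act τ pq.1}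

/-- `τ₁` and `τ₂` define the same element of `PGL₂(k)`, i.e. they agree up to a
nonzero scalar. -/
def PGLEq {k : Type*} [Field k] (τ₁ τ₂ : (Fin 2 → k) ≃ₗ[k] (Fin 2 → k)) : Prop :=
  ∃ c : k, c ≠ 0 ∧ ∀ v, τ₁ v = c • τ₂ v

namespace Stmt14Aux

open Projectivization

variable {k : Type*} [Field k]

lemma act_mk (τ : (Fin 2 → k) ≃ₗ[k] (Fin 2 → k)) (v : Fin 2 → k) (hv : v ≠ 0)
    (hv' : τ v ≠ 0) :
    act τ (Projectivization.mk k v hv) = Projectivization.mk k (τ v) hv' :=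
  Projectivization.map_mk τ.toLinearMap τ.injective v hv

lemma ne_zero_map (τ : (Fin 2 → k) ≃ₗ[k] (Fin 2 → k)) {v : Fin 2 → k} (hv : v ≠ 0) :
    τ v ≠ 0 := by
  simp [LinearEquiv.map_eq_zero_iff, hv]

lemma act_act (f g : (Fin 2 → k) ≃ₗ[k] (Fin 2 → k)) (p : ProjLine k) :
    act g (act f p) = act (f.trans g) p := by
  induction p using Projectivization.ind with
  | h v hv =>
    rw [act_mk f v hv (ne_zero_map f hv),
      act_mk g (f v) (ne_zero_map f hv) (ne_zero_map g (ne_zero_map f hv)),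
      act_mk (f.trans g) v hv (ne_zero_map (f.trans g) hv)]
    rfl

lemma act_symm_act (f : (Fin 2 → k) ≃ₗ[k] (Fin 2 → k)) (p : ProjLine k) :
    act f.symm (act f p) = p := by
  induction p using Projectivization.ind with
  | h v hv =>
    rw [act_mk f v hv (ne_zero_map f hv),
      act_mk f.symm (f v) (ne_zero_map f hv) (ne_zero_map f.symm (ne_zero_map f hv))]
    congr 1
    simp

lemma act_act_symm (f : (Fin 2 → k) ≃ₗ[k] (Fin 2 → k)) (p : ProjLine k) :
    act f (act f.symm p) = p := by
  simpa using act_symm_act f.symm p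

lemma pgleq_symm {σ σ' : (Fin 2 → k) ≃ₗ[k] (Fin 2 → k)} (h : PGLEq σ σ') : PGLEq σ' σ := by
  obtain ⟨c, hc, hcv⟩ := h
  exact ⟨c⁻¹, inv_ne_zero hc, fun v => by
    rw [hcv v, smul_smul, inv_mul_cancel₀ hc, one_smul]⟩

lemma pgleq_trans {σ₁ σ₂ σ₃ : (Fin 2 → k) ≃ₗ[k] (Fin 2 → k)} (h : PGLEq σ₁ σ₂)
    (h' : PGLEq σ₂ σ₃) : PGLEq σ₁ σ₃ := by
  obtain ⟨c, hc, hcv⟩ := h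
  obtain ⟨d, hd, hdv⟩ := h'
  exact ⟨c * d, mul_ne_zero hc hd, fun v => by rw [hcv v, hdv v, smul_smul]⟩

lemma act_eq_of_pgleq {σ σ' : (Fin 2 → k) ≃ₗ[k] (Fin 2 → k)} (h : PGLEq σ σ')
    (p : ProjLine k) : act σ p = act σ' p := by
  obtain ⟨c, hc, hcv⟩ := h
  induction p using Projectivization.ind with
  | h v hv =>
    rw [act_mk σ v hv (ne_zero_map σ hv), act_mk σ' v hv (ne_zero_map σ' hv),
      Projectivization.mk_eq_mk_iff']
    exact ⟨c, (hcv v).symm⟩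

lemma graph_eq_of_pgleq {σ σ' : (Fin 2 → k) ≃ₗ[k] (Fin 2 → k)} (h : PGLEq σ σ') :
    graph σ = graph σ' := by
  ext ⟨p, q⟩
  simp only [graph, Set.mem_setOf_eq, act_eq_of_pgleq h p]

/-- If `act σ` fixes three distinct points then `σ` is a scalar. -/
lemma fix3 {σ : (Fin 2 → k) ≃ₗ[k] (Fin 2 → k)} {p₁ p₂ p₃ : ProjLine k}
    (h12 : p₁ ≠ p₂) (h13 : p₁ ≠ p₃) (h23 : p₂ ≠ p₃)
    (f1 : act σ p₁ = p₁) (f2 : act σ p₂ = p₂) (f3 : act σ p₃ = p₃) :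
    ∃ c : k, c ≠ 0 ∧ ∀ v, σ v = c • v := by
  induction p₁ using Projectivization.ind with | h v₁ hv₁ => ?_
  induction p₂ using Projectivization.ind with | h v₂ hv₂ => ?_
  induction p₃ using Projectivization.ind with | h v₃ hv₃ => ?_
  rw [act_mk σ v₁ hv₁ (ne_zero_map σ hv₁), Projectivization.mk_eq_mk_iff'] at f1
  rw [act_mk σ v₂ hv₂ (ne_zero_map σ hv₂), Projectivization.mk_eq_mk_iff'] at f2
  rw [act_mk σ v₃ hv₃ (ne_zero_map σ hv₃), Projectivization.mk_eq_mk_iff'] at f3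
  obtain ⟨c₁, hc₁⟩ := f1
  obtain ⟨c₂, hc₂⟩ := f2
  obtain ⟨c₃, hc₃⟩ := f3
  have hc₁0 : c₁ ≠ 0 := by
    intro hc
    apply ne_zero_map σ hv₁
    rw [← hc₁, hc, zero_smul]
  have hli : LinearIndependent k ![v₁, v₂] := by
    rw [linearIndependent_fin2]
    refine ⟨by simpa using hv₂, fun a ha => ?_⟩
    apply h12
    rw [Projectivization.mk_eq_mk_iff']
    exact ⟨a, by simpa using ha⟩
  have hrange : Set.range ![v₁, v₂] = {v₁, v₂} := by
    ext x
    simp only [Set.mem_range, Fin.exists_fin_two, Set.mem_insert_iff, Set.mem_singleton_iff]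
    constructor
    · rintro (h|h) <;> simp [h.symm]
    · rintro (h|h) <;> simp [h]
  have hspan : Submodule.span k {v₁, v₂} = ⊤ := by
    have := hli.span_eq_top_of_card_eq_finrank (by simp)
    rwa [hrange] at this
  have key : ∀ w : Fin 2 → k, ∃ s t : k, s • v₁ + t • v₂ = w := by
    intro w
    have hw : w ∈ Submodule.span k ({v₁, v₂} : Set (Fin 2 → k)) := by
      rw [hspan]; trivial
    exact Submodule.mem_span_pair.mp hw
  obtain ⟨a, b, hab⟩ := key v₃
  have hindep : ∀ s t : k, s • v₁ + t • v₂ = 0 → s = 0 ∧ t = 0 := by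
    intro s t hst
    have := Fintype.linearIndependent_iff.mp hli ![s, t]
      (by simpa [Fin.sum_univ_two] using hst)
    exact ⟨this 0, this 1⟩
  have ha0 : a ≠ 0 := by
    intro haz
    apply h23
    have : Projectivization.mk k v₃ hv₃ = Projectivization.mk k v₂ hv₂ := by
      rw [Projectivization.mk_eq_mk_iff']
      exact ⟨b, by rw [← hab, haz, zero_smul, zero_add]⟩
    exact this.symm
  have hb0 : b ≠ 0 := by
    intro hbz
    apply h13
    have : Projectivization.mk k v₃ hv₃ = Projectivization.mk k v₁ hv₁ := by
      rw [Projectivization.mk_eq_mk_iff']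
      exact ⟨a, by rw [← hab, hbz, zero_smul, add_zero]⟩
    exact this.symm
  have h1 : σ v₃ = c₃ • v₃ := hc₃.symm
  rw [← hab, map_add, map_smul, map_smul, ← hc₁, ← hc₂] at h1
  have e0 : (a * (c₁ - c₃)) • v₁ + (b * (c₂ - c₃)) • v₂ = 0 := by
    calc (a * (c₁ - c₃)) • v₁ + (b * (c₂ - c₃)) • v₂
        = (a • (c₁ • v₁) + b • (c₂ • v₂)) - c₃ • (a • v₁ + b • v₂) := by module
      _ = 0 := by rw [h1, sub_self]
  obtain ⟨e1, e2⟩ := hindep _ _ e0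
  have ec13 : c₁ = c₃ := sub_eq_zero.mp ((mul_eq_zero.mp e1).resolve_left ha0)
  have ec23 : c₂ = c₃ := sub_eq_zero.mp ((mul_eq_zero.mp e2).resolve_left hb0)
  refine ⟨c₁, hc₁0, fun v => ?_⟩
  obtain ⟨s, t, hst⟩ := key v
  rw [← hst, map_add, map_smul, map_smul, ← hc₁, ← hc₂, ec13, ec23]
  module



lemma finite_of_no3 {α : Type*} {s : Set α}
    (h : ∀ a ∈ s, ∀ b ∈ s, ∀ c ∈ s, a = b ∨ a = c ∨ b = c) : s.Finite := by
  rcases Set.eq_empty_or_nonempty s with rfl | ⟨a, ha⟩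
  · exact Set.finite_empty
  by_cases h2 : ∃ b ∈ s, b ≠ a
  · obtain ⟨b, hb, hba⟩ := h2
    refine Set.Finite.subset ((Set.finite_singleton b).insert a) ?_
    intro c hc
    rcases h a ha b hb c hc with h' | h' | h'
    · exact absurd h'.symm hba
    · subst h'; simp
    · subst h'; simp
  · push_neg at h2
    exact Set.Finite.subset (Set.finite_singleton a) h2

lemma vec_ne (t : k) : ![1, t] ≠ (0 : Fin 2 → k) := by
  intro h
  have := congrFun h 0
  simp at this

lemma projline_infinite [Infinite k] : Infinite (ProjLine k) := by
  refine Infinite.of_injective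
    (fun t : k => Projectivization.mk k ![1, t] (vec_ne t)) ?_
  intro s t hst
  rw [Projectivization.mk_eq_mk_iff'] at hst
  obtain ⟨a, ha⟩ := hst
  have h0 := congrFun ha 0
  have h1 := congrFun ha 1
  simp at h0 h1
  rw [h0, one_mul] at h1
  exact h1.symm

lemma agree [Infinite k] {a a' b' : (Fin 2 → k) ≃ₗ[k] (Fin 2 → k)}
    (hp : ∀ p : ProjLine k, act a p = act a' p ∨ act a p = act b' p) :
    PGLEq a a' ∨ PGLEq a b' := by
  by_contra hcon
  push_neg at hcon
  obtain ⟨h1, h2⟩ := hcon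
  have fixgen : ∀ (x : (Fin 2 → k) ≃ₗ[k] (Fin 2 → k)) (p : ProjLine k),
      act a p = act x p → act (a.trans x.symm) p = p := by
    intro x p hp'
    rw [← act_act, hp', act_symm_act]
  have scal : ∀ (x : (Fin 2 → k) ≃ₗ[k] (Fin 2 → k)),
      (∃ c : k, c ≠ 0 ∧ ∀ v, (a.trans x.symm) v = c • v) → PGLEq a x := by
    rintro x ⟨c, hc0, hcv⟩
    refine ⟨c, hc0, fun v => ?_⟩
    have h3 := hcv v
    simp only [LinearEquiv.trans_apply] at h3
    have : a v = x (c • v) := by rw [← h3, LinearEquiv.apply_symm_apply]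
    rw [this, map_smul]
  have hfin : ∀ (x : (Fin 2 → k) ≃ₗ[k] (Fin 2 → k)), ¬ PGLEq a x →
      {p : ProjLine k | act a p = act x p}.Finite := by
    intro x hx
    apply finite_of_no3
    intro p hp1 q hq1 r hr1
    by_contra hc
    push_neg at hc
    obtain ⟨hpq, hpr, hqr⟩ := hc
    exact hx (scal x (fix3 hpq hpr hqr (fixgen x p hp1) (fixgen x q hq1) (fixgen x r hr1)))
  have huniv : (Set.univ : Set (ProjLine k)) ⊆
      {p : ProjLine k | act a p = act a' p} ∪ {p : ProjLine k | act a p = act b' p} :=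
    fun p _ => hp p
  haveI := projline_infinite (k := k)
  exact Set.infinite_univ (Set.Finite.subset ((hfin a' h1).union (hfin b' h2)) huniv)

lemma union_graph [Infinite k] {a b a' b' : (Fin 2 → k) ≃ₗ[k] (Fin 2 → k)}
    (h : ¬ PGLEq a b) (h' : ¬ PGLEq a' b')
    (heq : graph a ∪ graph b = graph a' ∪ graph b') :
    (PGLEq a' a ∧ PGLEq b' b) ∨ (PGLEq a' b ∧ PGLEq b' a) := by
  have mem : ∀ (x : (Fin 2 → k) ≃ₗ[k] (Fin 2 → k)) (p : ProjLine k),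
      (p, act x p) ∈ graph x := fun x p => rfl
  have ha : ∀ p : ProjLine k, act a p = act a' p ∨ act a p = act b' p := by
    intro p
    have h0 : (p, act a p) ∈ graph a' ∪ graph b' := by
      rw [← heq]; exact Or.inl (mem a p)
    rcases h0 with h0 | h0
    · exact Or.inl h0
    · exact Or.inr h0
  have hb : ∀ p : ProjLine k, act b p = act a' p ∨ act b p = act b' p := by
    intro p
    have h0 : (p, act b p) ∈ graph a' ∪ graph b' := by
      rw [← heq]; exact Or.inr (mem b p)
    rcases h0 with h0 | h0
    · exact Or.inl h0
    · exact Or.inr h0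
  rcases agree ha with h1 | h1 <;> rcases agree hb with h2 | h2
  · exact absurd (pgleq_trans h1 (pgleq_symm h2)) h
  · exact Or.inl ⟨pgleq_symm h1, pgleq_symm h2⟩
  · exact Or.inr ⟨pgleq_symm h2, pgleq_symm h1⟩
  · exact absurd (pgleq_trans h1 (pgleq_symm h2)) h

lemma image_graph (μ τ : (Fin 2 → k) ≃ₗ[k] (Fin 2 → k)) :
    Prod.map (act μ) (act μ) '' graph τ = graph ((μ.symm.trans τ).trans μ) := by
  have hact : ∀ x : ProjLine k,
      act ((μ.symm.trans τ).trans μ) x = act μ (act τ (act μ.symm x)) := by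
    intro x
    rw [act_act, act_act]
    congr 1
  ext ⟨x, y⟩
  constructor
  · rintro ⟨⟨p, q⟩, hq, heq⟩
    have hq' : q = act τ p := hq
    have hx : act μ p = x := congrArg Prod.fst heq
    have hy : act μ q = y := congrArg Prod.snd heq
    show y = act ((μ.symm.trans τ).trans μ) x
    rw [hact, ← hx, act_symm_act, ← hq', hy]
  · intro hy
    have hy' : y = act ((μ.symm.trans τ).trans μ) x := hy
    rw [hact] at hy'
    refine ⟨(act μ.symm x, act μ.symm y), ?_, ?_⟩
    · show act μ.symm y = act τ (act μ.symm x)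
      rw [hy', act_symm_act]
    · show (act μ (act μ.symm x), act μ (act μ.symm y)) = (x, y)
      rw [act_act_symm, act_act_symm]

lemma pgleq_conj {μ σ σ' : (Fin 2 → k) ≃ₗ[k] (Fin 2 → k)}
    (h : PGLEq ((μ.symm.trans σ).trans μ) ((μ.symm.trans σ').trans μ)) : PGLEq σ σ' := by
  obtain ⟨c, hc, hcv⟩ := h
  refine ⟨c, hc, fun w => ?_⟩
  have h3 := hcv (μ w)
  simp only [LinearEquiv.trans_apply, LinearEquiv.symm_apply_apply] at h3
  apply μ.injective
  rw [map_smul]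
  exact h3

end Stmt14Aux

open Stmt14Aux in
/-- For `τ₁ ≠ τ₂` and `τ'₁ ≠ τ'₂` in `PGL₂(k)`, set
`E = C_{τ₁} ∪ C_{τ₂}` and `E' = C_{τ'₁} ∪ C_{τ'₂}`.  Then `E ∼₂ E'` (i.e.
`E' = (μ × μ)(E)` for some `μ ∈ PGL₂(k)`) iff `(τ'₁, τ'₂) ∼ (τ₁, τ₂)` or
`(τ'₁, τ'₂) ∼ (τ₂, τ₁)`. -/
theorem stmt14 {k : Type*} [Field k] [IsAlgClosed k] [CharZero k]
    (τ₁ τ₂ τ₁' τ₂' : (Fin 2 → k) ≃ₗ[k] (Fin 2 → k))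
    (h : ¬ PGLEq τ₁ τ₂) (h' : ¬ PGLEq τ₁' τ₂') :
    (∃ μ : (Fin 2 → k) ≃ₗ[k] (Fin 2 → k),
        Prod.map (act μ) (act μ) '' (graph τ₁ ∪ graph τ₂) = graph τ₁' ∪ graph τ₂') ↔
      ((∃ μ : (Fin 2 → k) ≃ₗ[k] (Fin 2 → k),
          (∃ c : k, c ≠ 0 ∧ ∀ v : Fin 2 → k, τ₁' v = c • μ.symm (τ₁ (μ v))) ∧
          (∃ c : k, c ≠ 0 ∧ ∀ v : Fin 2 → k, τ₂' v = c • μ.symm (τ₂ (μ v)))) ∨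
        (∃ μ : (Fin 2 → k) ≃ₗ[k] (Fin 2 → k),
          (∃ c : k, c ≠ 0 ∧ ∀ v : Fin 2 → k, τ₁' v = c • μ.symm (τ₂ (μ v))) ∧
          (∃ c : k, c ≠ 0 ∧ ∀ v : Fin 2 → k, τ₂' v = c • μ.symm (τ₁ (μ v))))) := by
  constructor
  · rintro ⟨μ, hμ⟩
    rw [Set.image_union, image_graph, image_graph] at hμ
    have hconj : ¬ PGLEq ((μ.symm.trans τ₁).trans μ) ((μ.symm.trans τ₂).trans μ) :=
      fun hc => h (pgleq_conj hc)
    rcases union_graph hconj h' hμ with ⟨h1, h2⟩ | ⟨h1, h2⟩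
    · obtain ⟨c₁, hc₁, hv₁⟩ := h1
      obtain ⟨c₂, hc₂, hv₂⟩ := h2
      refine Or.inl ⟨μ.symm, ⟨c₁, hc₁, fun v => ?_⟩, ⟨c₂, hc₂, fun v => ?_⟩⟩
      · have := hv₁ v
        simp only [LinearEquiv.trans_apply] at this
        simpa [LinearEquiv.symm_symm] using this
      · have := hv₂ v
        simp only [LinearEquiv.trans_apply] at this
        simpa [LinearEquiv.symm_symm] using this
    · obtain ⟨c₁, hc₁, hv₁⟩ := h1
      obtain ⟨c₂, hc₂, hv₂⟩ := h2
      refine Or.inr ⟨μ.symm, ⟨c₁, hc₁, fun v => ?_⟩, ⟨c₂, hc₂, fun v => ?_⟩⟩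
      · have := hv₁ v
        simp only [LinearEquiv.trans_apply] at this
        simpa [LinearEquiv.symm_symm] using this
      · have := hv₂ v
        simp only [LinearEquiv.trans_apply] at this
        simpa [LinearEquiv.symm_symm] using this
  · rintro (⟨μ, ⟨c₁, hc₁, h1⟩, ⟨c₂, hc₂, h2⟩⟩ | ⟨μ, ⟨c₁, hc₁, h1⟩, ⟨c₂, hc₂, h2⟩⟩)
    · refine ⟨μ.symm, ?_⟩
      rw [Set.image_union, image_graph, image_graph]
      have g1 : graph ((μ.symm.symm.trans τ₁).trans μ.symm) = graph τ₁' := by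
        refine graph_eq_of_pgleq (pgleq_symm ⟨c₁, hc₁, fun v => ?_⟩)
        simp only [LinearEquiv.trans_apply, LinearEquiv.symm_symm]
        exact h1 v
      have g2 : graph ((μ.symm.symm.trans τ₂).trans μ.symm) = graph τ₂' := by
        refine graph_eq_of_pgleq (pgleq_symm ⟨c₂, hc₂, fun v => ?_⟩)
        simp only [LinearEquiv.trans_apply, LinearEquiv.symm_symm]
        exact h2 v
      rw [g1, g2]
    · refine ⟨μ.symm, ?_⟩
      rw [Set.image_union, image_graph, image_graph]
      have g1 : graph ((μ.symm.symm.trans τ₂).trans μ.symm) = graph τ₁' := by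
        refine graph_eq_of_pgleq (pgleq_symm ⟨c₁, hc₁, fun v => ?_⟩)
        simp only [LinearEquiv.trans_apply, LinearEquiv.symm_symm]
        exact h1 v
      have g2 : graph ((μ.symm.symm.trans τ₁).trans μ.symm) = graph τ₂' := by
        refine graph_eq_of_pgleq (pgleq_symm ⟨c₂, hc₂, fun v => ?_⟩)
        simp only [LinearEquiv.trans_apply, LinearEquiv.symm_symm]
        exact h2 v
      rw [g1, g2, Set.union_comm]
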